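/- arXiv:2503.16884 — 2 statements merged into one kernel-verified Lean document; each statement's English description precedes it below -/
import Mathlib

section
/- For the dihedral group D_{2n} of order 2n with n odd, D(D_{2n}) = σ(n) + 2n; consequently D_{2n} is Leinster/quasi-Leinster/almost Leinster if and only if n is perfect/quasi-perfect/almost perfect respectively. -/
/-- Sum of the orders of all normal subgroups of `G`. -/
noncomputable def D (G : Type*) [Group G] : ℕ :=
  ∑ᶠ N ∈ {N : Subgroup G | N.Normal}, Nat.card N

/-!
For odd `n` the element `2` is a unit of `ZMod n`, so conjugating by rotations moves any reflection
to any other: a normal subgroup of `D_{2n}` containing one reflection contains all of them, hence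
also every rotation `sr 0 * sr k = r k`, and is everything. The remaining normal subgroups lie in
the cyclic rotation subgroup, all of whose subgroups are normal; a cyclic group of order `n` has
exactly one subgroup of order `d` for each `d ∣ n`, so they contribute `σ(n)`, and `D_{2n}` itself
contributes `2n`.
-/

open DihedralGroup

namespace IsCyclic

variable {α : Type*} [Group α] [Finite α] [IsCyclic α]

theorem coe_subgroup_eq_setOf_pow_card_eq_one (H : Subgroup α) :
    (H : Set α) = {a | a ^ Nat.card H = 1} := by
  classical
  have := Fintype.ofFinite α
  refine Set.eq_of_subset_of_ncard_le (fun a ha => ?_) ?_ (Set.toFinite _)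
  · exact congrArg Subtype.val (pow_card_eq_one' (G := H) (x := ⟨a, ha⟩))
  · rw [Set.ncard_eq_toFinset_card', Set.toFinset_ofPred]
    exact card_pow_eq_one_le Nat.card_pos

theorem subgroup_eq_of_card_eq {H K : Subgroup α} (h : Nat.card H = Nat.card K) : H = K :=
  SetLike.coe_injective <| by
    rw [coe_subgroup_eq_setOf_pow_card_eq_one, h, ← coe_subgroup_eq_setOf_pow_card_eq_one]

theorem exists_subgroup_card_eq {d : ℕ} (hd : d ∣ Nat.card α) :
    ∃ H : Subgroup α, Nat.card H = d := by
  obtain ⟨g, hg⟩ := exists_generator (α := α)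
  refine ⟨Subgroup.zpowers (g ^ (Nat.card α / d)), ?_⟩
  rw [Nat.card_zpowers, orderOf_pow, orderOf_eq_card_of_forall_mem_zpowers hg,
    Nat.gcd_eq_right (Nat.div_dvd_of_dvd hd), Nat.div_div_self hd Nat.card_pos.ne']

theorem finsum_card_subgroup :
    ∑ᶠ H : Subgroup α, Nat.card H = ArithmeticFunction.sigma 1 (Nat.card α) := by
  have := Fintype.ofFinite (Subgroup α)
  rw [finsum_eq_sum_of_fintype, ArithmeticFunction.sigma_one_apply]
  refine Finset.sum_bij (fun H _ => Nat.card H) (fun H _ => ?_)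
    (fun _ _ _ _ => subgroup_eq_of_card_eq) (fun d hd => ?_) (fun _ _ => rfl)
  · exact Nat.mem_divisors.2 ⟨Subgroup.card_subgroup_dvd_card H, Nat.card_pos.ne'⟩
  · obtain ⟨H, hH⟩ := exists_subgroup_card_eq (Nat.mem_divisors.1 hd).1
    exact ⟨H, Finset.mem_univ _, hH⟩

end IsCyclic

namespace DihedralGroup

variable {n : ℕ}

def rotHom (n : ℕ) : Multiplicative (ZMod n) →* DihedralGroup n where
  toFun i := r i.toAdd
  map_one' := rfl
  map_mul' _ _ := (r_mul_r _ _).symm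

theorem rotHom_injective : Function.Injective (rotHom n) := fun _ _ h => r.inj h

theorem sr_notMem_map_rotHom (H : Subgroup (Multiplicative (ZMod n))) (i : ZMod n) :
    sr i ∉ H.map (rotHom n) := by
  rintro ⟨_, _, h⟩
  cases h

theorem map_rotHom_normal (H : Subgroup (Multiplicative (ZMod n))) :
    (H.map (rotHom n)).Normal where
  conj_mem := by
    rintro _ ⟨h, hh, rfl⟩ (j | j)
    · refine ⟨h, hh, ?_⟩
      show r h.toAdd = r j * r h.toAdd * r (-j)
      rw [r_mul_r, r_mul_r, add_neg_cancel_comm]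
    · refine ⟨h⁻¹, H.inv_mem hh, ?_⟩
      show r (-h.toAdd) = sr j * r h.toAdd * sr j
      rw [sr_mul_r, sr_mul_sr, sub_add_cancel_left]

theorem r_mul_sr_mul_r_inv (i j : ZMod n) : r j * sr i * (r j)⁻¹ = sr (i - (j + j)) := by
  rw [inv_r, r_mul_sr, sr_mul_r]
  congr 1
  ring

theorem eq_top_of_sr_mem (hn : Odd n) {N : Subgroup (DihedralGroup n)} (hN : N.Normal)
    {i : ZMod n} (hi : sr i ∈ N) : N = ⊤ := by
  let u := ZMod.unitOfCoprime 2 hn.coprime_two_left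
  have hsr (k : ZMod n) : sr k ∈ N := by
    have h := hN.conj_mem _ hi (r (u⁻¹ * (i - k)))
    rwa [r_mul_sr_mul_r_inv, ← two_mul, ← mul_assoc, show (2 : ZMod n) = u from rfl,
      Units.mul_inv, one_mul, sub_sub_cancel] at h
  refine N.eq_top_iff'.2 fun
    | r k => by simpa only [sr_mul_sr, sub_zero] using N.mul_mem (hsr 0) (hsr k)
    | sr k => hsr k

theorem setOf_normal_eq (hn : Odd n) :
    {N : Subgroup (DihedralGroup n) | N.Normal} =
      insert ⊤ (Set.range (Subgroup.map (rotHom n))) := by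
  ext N
  refine ⟨fun hN => ?_, ?_⟩
  · obtain ⟨i, hi⟩ | hsr := em (∃ i, sr i ∈ N)
    · exact Or.inl (eq_top_of_sr_mem hn hN hi)
    · refine Or.inr ⟨N.comap (rotHom n), Subgroup.map_comap_eq_self ?_⟩
      rintro (k | k) hk
      · exact ⟨Multiplicative.ofAdd k, rfl⟩
      · exact absurd ⟨k, hk⟩ hsr
  · rintro (rfl | ⟨H, rfl⟩)
    · exact Subgroup.normal_top
    · exact map_rotHom_normal H

theorem D_eq_of_odd (hn : Odd n) : D (DihedralGroup n) = ArithmeticFunction.sigma 1 n + 2 * n := by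
  have : NeZero n := ⟨hn.pos.ne'⟩
  have htop : ⊤ ∉ Set.range (Subgroup.map (rotHom n)) :=
    fun ⟨H, hH⟩ => sr_notMem_map_rotHom H 0 (hH ▸ Subgroup.mem_top _)
  rw [D, setOf_normal_eq hn, finsum_mem_insert _ htop (Set.finite_range _),
    finsum_mem_range (Subgroup.map_injective rotHom_injective), Subgroup.card_top, nat_card]
  simp only [Subgroup.card_map_of_injective (f := rotHom n) rotHom_injective]
  rw [IsCyclic.finsum_card_subgroup, Nat.card_eq_fintype_card, Fintype.card_multiplicative,
    ZMod.card, add_comm]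

end DihedralGroup

theorem D_dihedral_odd_general (n : ℕ) (hodd : Odd n) :
    D (DihedralGroup n) = ArithmeticFunction.sigma 1 n + 2 * n ∧
    (D (DihedralGroup n) = 2 * (2 * n) ↔ ArithmeticFunction.sigma 1 n = 2 * n) ∧
    (D (DihedralGroup n) = 2 * (2 * n) + 1 ↔ ArithmeticFunction.sigma 1 n = 2 * n + 1) ∧
    (D (DihedralGroup n) = 2 * (2 * n) - 1 ↔ ArithmeticFunction.sigma 1 n = 2 * n - 1) := by
  have hD := D_eq_of_odd hodd
  refine ⟨hD, ?_, ?_, ?_⟩ <;> rw [hD] <;> omega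

theorem D_dihedral_odd (n : ℕ) (hn : 0 < n) (hodd : Odd n) :
    D (DihedralGroup n) = ArithmeticFunction.sigma 1 n + 2 * n ∧
    (D (DihedralGroup n) = 2 * (2 * n) ↔ ArithmeticFunction.sigma 1 n = 2 * n) ∧
    (D (DihedralGroup n) = 2 * (2 * n) + 1 ↔ ArithmeticFunction.sigma 1 n = 2 * n + 1) ∧
    (D (DihedralGroup n) = 2 * (2 * n) - 1 ↔ ArithmeticFunction.sigma 1 n = 2 * n - 1) :=
  D_dihedral_odd_general n hodd
end

section
/- For the dihedral group D_{2n} of order 2n with n even, D(D_{2n}) = σ(n) + 4n; consequently for even n, D_{2n} is never Leinster, quasi-Leinster, or almost Leinster. -/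
open scoped ArithmeticFunction.sigma

section CyclicSubgroups

variable {G : Type*} [CommGroup G] [IsCyclic G] [Finite G]

theorem Subgroup.eq_ker_powMonoidHom_card (H : Subgroup G) :
    H = (powMonoidHom (Nat.card H) : G →* G).ker := by
  refine Subgroup.eq_of_le_of_card_ge (fun x hx => ?_) ?_
  · rw [MonoidHom.mem_ker, powMonoidHom_apply]
    exact congrArg Subtype.val (pow_card_eq_one' (x := (⟨x, hx⟩ : H)))
  · rw [IsCyclic.card_powMonoidHom_ker, Nat.gcd_eq_right (Subgroup.card_subgroup_dvd_card H)]

theorem IsCyclic.finsum_card_subgroup_eq_sigma_one :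
    ∑ᶠ H : Subgroup G, Nat.card H = σ 1 (Nat.card G) := by
  rw [ArithmeticFunction.sigma_one_apply, ← finsum_mem_coe_finset, ← finsum_mem_univ]
  refine finsum_mem_eq_of_bijOn (fun H => Nat.card H)
    ⟨fun H _ => ?_, fun H _ K _ hHK => ?_, fun d hd => ?_⟩ fun _ _ => rfl
  · exact Nat.mem_divisors.mpr ⟨Subgroup.card_subgroup_dvd_card H, Nat.card_pos.ne'⟩
  · dsimp only at hHK
    rw [H.eq_ker_powMonoidHom_card, K.eq_ker_powMonoidHom_card, hHK]
  · refine ⟨(powMonoidHom d : G →* G).ker, Set.mem_univ _, ?_⟩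
    show Nat.card _ = d
    rw [IsCyclic.card_powMonoidHom_ker, Nat.gcd_eq_right (Nat.dvd_of_mem_divisors hd)]

end CyclicSubgroups

theorem Subgroup.eq_or_eq_top_of_le_of_index_prime {G : Type*} [Group G] {H K : Subgroup G}
    (hle : H ≤ K) (hp : H.index.Prime) : K = H ∨ K = ⊤ := by
  rw [← Subgroup.relIndex_mul_index hle, Nat.prime_mul_iff] at hp
  rcases hp with ⟨-, hK⟩ | ⟨-, hHK⟩
  · exact Or.inr (Subgroup.index_eq_one.mp hK)
  · exact Or.inl (le_antisymm (Subgroup.relIndex_eq_one.mp hHK) hle)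

theorem ZMod.even_of_castHom_two_eq_zero {n : ℕ} (h : 2 ∣ n) {k : ZMod n}
    (hk : ZMod.castHom h (ZMod 2) k = 0) : Even k := by
  obtain ⟨a, rfl⟩ := ZMod.intCast_surjective k
  rw [map_intCast, ZMod.intCast_eq_zero_iff_even] at hk
  exact hk.map (Int.castRingHom (ZMod n))

theorem ArithmeticFunction.add_one_le_sigma_one {n : ℕ} (hn : 1 < n) : n + 1 ≤ σ 1 n := by
  rw [ArithmeticFunction.sigma_one_apply, Nat.sum_divisors_eq_sum_properDivisors_add_self]
  have := Finset.single_le_sum (f := id) (fun _ _ => Nat.zero_le _)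
    (Nat.one_mem_properDivisors_iff_one_lt.mpr hn)
  simp only [id] at this
  omega

namespace DihedralGroup

variable {n : ℕ}

def rotation : Multiplicative (ZMod n) →* DihedralGroup n where
  toFun i := r i.toAdd
  map_one' := rfl
  map_mul' _ _ := rfl

theorem rotation_injective : Function.Injective (rotation (n := n)) :=
  fun _ _ h => r.inj h

theorem sr_notMem_range_rotation (i : ZMod n) : sr i ∉ (rotation (n := n)).range := by
  rintro ⟨_, h⟩
  cases h

theorem top_notMem_range_map_rotation :
    ⊤ ∉ Set.range (Subgroup.map (rotation (n := n))) := by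
  rintro ⟨H, hH⟩
  exact sr_notMem_range_rotation 0 (Subgroup.map_le_range _ _ (hH ▸ Subgroup.mem_top _))

theorem normal_map_rotation (H : Subgroup (Multiplicative (ZMod n))) :
    (H.map rotation).Normal := by
  constructor
  rintro _ ⟨i, hi, rfl⟩ (j | j)
  · refine ⟨i, hi, ?_⟩
    show r _ = r _
    congr 1
    simp
  · refine ⟨i⁻¹, H.inv_mem hi, ?_⟩
    show r _ = r _
    congr 1
    simp

section Parity

variable (h : 2 ∣ n)

/-- For even `n`, the characters `D_{2n} → ±1` with `r ↦ -1`; `c` is the value at `sr 0`. -/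
def parityChar (c : ZMod 2) : DihedralGroup n →* Multiplicative (ZMod 2) where
  toFun
    | r i => .ofAdd (ZMod.castHom h (ZMod 2) i)
    | sr i => .ofAdd (ZMod.castHom h (ZMod 2) i + c)
  map_one' := congrArg Multiplicative.ofAdd (map_zero _)
  map_mul' := by
    rintro (i | i) (j | j) <;>
      simp only [r_mul_r, r_mul_sr, sr_mul_r, sr_mul_sr, map_add, map_sub, ← ofAdd_add] <;>
      congr 1 <;>
      generalize ZMod.castHom h (ZMod 2) i = a <;> generalize ZMod.castHom h (ZMod 2) j = b <;>
      revert a b c <;> decide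

theorem parityChar_r (c : ZMod 2) (i : ZMod n) :
    parityChar h c (r i) = .ofAdd (ZMod.castHom h (ZMod 2) i) := rfl

theorem parityChar_sr (c : ZMod 2) (i : ZMod n) :
    parityChar h c (sr i) = .ofAdd (ZMod.castHom h (ZMod 2) i + c) := rfl

theorem parityChar_surjective (c : ZMod 2) : Function.Surjective (parityChar h c) := by
  intro x
  obtain ⟨i, hi⟩ := ZMod.castHom_surjective h x.toAdd
  exact ⟨r i, by rw [parityChar_r, hi, ofAdd_toAdd]⟩

theorem index_ker_parityChar (c : ZMod 2) : (parityChar h c).ker.index = 2 := by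
  rw [Subgroup.index_ker, MonoidHom.range_eq_top.mpr (parityChar_surjective h c),
    Subgroup.card_top, Nat.card_congr Multiplicative.toAdd, Nat.card_zmod]

theorem card_ker_parityChar [NeZero n] (c : ZMod 2) : Nat.card (parityChar h c).ker = n := by
  have := (parityChar h c).ker.card_mul_index
  rw [index_ker_parityChar, nat_card] at this
  omega

theorem sr_mem_ker_parityChar (i : ZMod n) :
    sr i ∈ (parityChar h (ZMod.castHom h (ZMod 2) i)).ker := by
  rw [MonoidHom.mem_ker, parityChar_sr, CharTwo.add_self_eq_zero, ofAdd_zero]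

theorem top_notMem_range_ker_parityChar : ⊤ ∉ Set.range fun c => (parityChar (n := n) h c).ker := by
  rintro ⟨c, hc : (parityChar h c).ker = ⊤⟩
  have hr : r 1 ∈ (parityChar h c).ker := hc ▸ Subgroup.mem_top _
  rw [MonoidHom.mem_ker, parityChar_r, map_one] at hr
  exact absurd hr (by decide)

theorem ker_parityChar_injective : Function.Injective fun c => (parityChar (n := n) h c).ker := by
  intro c d hcd
  obtain ⟨i, rfl⟩ := ZMod.castHom_surjective h c
  have hi := sr_mem_ker_parityChar h i
  dsimp only at hcd
  rw [hcd, MonoidHom.mem_ker, parityChar_sr, ofAdd_eq_one] at hi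
  clear hcd
  generalize ZMod.castHom h (ZMod 2) i = a at hi ⊢
  revert a d
  decide

theorem disjoint_range_map_rotation_range_ker_parityChar :
    Disjoint (Set.range (Subgroup.map rotation))
      (Set.range fun c => (parityChar (n := n) h c).ker) := by
  rw [Set.disjoint_left]
  rintro _ ⟨H, rfl⟩ ⟨c, hc : (parityChar h c).ker = _⟩
  obtain ⟨i, rfl⟩ := ZMod.castHom_surjective h c
  exact sr_notMem_range_rotation i (Subgroup.map_le_range _ _ (hc ▸ sr_mem_ker_parityChar h i))

theorem ker_parityChar_le {N : Subgroup (DihedralGroup n)} (hN : N.Normal) {i : ZMod n}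
    (hi : sr i ∈ N) : (parityChar h (ZMod.castHom h (ZMod 2) i)).ker ≤ N := by
  have hsr (j : ZMod n) : sr (i + (j + j)) ∈ N := by
    simpa [r_mul_sr, sr_mul_r, add_assoc] using hN.conj_mem _ hi (r (-j))
  have hr (j : ZMod n) : r (j + j) ∈ N := by
    simpa [sr_mul_sr] using N.mul_mem hi (hsr j)
  rintro (k | k) hk <;> rw [MonoidHom.mem_ker] at hk
  · rw [parityChar_r, ofAdd_eq_one] at hk
    obtain ⟨j, rfl⟩ := ZMod.even_of_castHom_two_eq_zero h hk
    exact hr j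
  · rw [parityChar_sr, ofAdd_eq_one, ← CharTwo.sub_eq_add, ← map_sub] at hk
    obtain ⟨j, hj⟩ := ZMod.even_of_castHom_two_eq_zero h hk
    rw [sub_eq_iff_eq_add'.mp hj]
    exact hsr j

theorem eq_map_rotation_or_ker_parityChar_or_top {N : Subgroup (DihedralGroup n)}
    (hN : N.Normal) :
    N ∈ Set.range (Subgroup.map rotation) ∨ N ∈ Set.range (fun c => (parityChar h c).ker) ∨
      N = ⊤ := by
  by_cases hrot : N ≤ rotation.range
  · exact Or.inl ⟨N.comap rotation, Subgroup.map_comap_eq_self hrot⟩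
  obtain ⟨x, hxN, hx⟩ := SetLike.not_le_iff_exists.mp hrot
  obtain ⟨i, rfl⟩ : ∃ i, x = sr i := by
    cases x with
    | r i => exact absurd ⟨.ofAdd i, rfl⟩ hx
    | sr i => exact ⟨i, rfl⟩
  rcases Subgroup.eq_or_eq_top_of_le_of_index_prime (ker_parityChar_le h hN hxN)
    (by rw [index_ker_parityChar]; exact Nat.prime_two) with hker | htop
  · exact Or.inr (Or.inl ⟨_, hker.symm⟩)
  · exact Or.inr (Or.inr htop)

theorem setOf_normal_eq_s18 :
    {N : Subgroup (DihedralGroup n) | N.Normal} =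
      insert ⊤ (Set.range (Subgroup.map rotation) ∪ Set.range fun c => (parityChar h c).ker) := by
  ext N
  simp only [Set.mem_ofPred_eq, Set.mem_insert_iff, Set.mem_union]
  constructor
  · intro hN
    rcases eq_map_rotation_or_ker_parityChar_or_top h hN with hrot | hker | htop
    exacts [Or.inr (Or.inl hrot), Or.inr (Or.inr hker), Or.inl htop]
  · rintro (rfl | ⟨H, rfl⟩ | ⟨c, rfl⟩)
    exacts [inferInstance, normal_map_rotation H, MonoidHom.normal_ker _]

end Parity

theorem D_eq_sigma_one_add [NeZero n] (h : 2 ∣ n) : D (DihedralGroup n) = σ 1 n + 4 * n := by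
  have hrot : ∑ᶠ H : Subgroup (Multiplicative (ZMod n)), Nat.card (H.map rotation) = σ 1 n := by
    simp only [Subgroup.card_map_of_injective (rotation_injective (n := n))]
    rw [IsCyclic.finsum_card_subgroup_eq_sigma_one, Nat.card_congr Multiplicative.toAdd,
      Nat.card_zmod]
  have hker : ∑ᶠ c : ZMod 2, Nat.card (parityChar h c).ker = 2 * n := by
    simp only [card_ker_parityChar, finsum_eq_sum_of_fintype, Finset.sum_const,
      Finset.card_univ, ZMod.card, smul_eq_mul]
  have htop : ⊤ ∉ Set.range (Subgroup.map rotation) ∪ Set.range fun c => (parityChar h c).ker :=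
    fun hmem => hmem.elim top_notMem_range_map_rotation (top_notMem_range_ker_parityChar h)
  rw [D, setOf_normal_eq_s18 h, finsum_mem_insert _ htop (Set.toFinite _),
    finsum_mem_union (disjoint_range_map_rotation_range_ker_parityChar h) (Set.toFinite _)
      (Set.toFinite _), finsum_mem_range (Subgroup.map_injective rotation_injective),
    finsum_mem_range (ker_parityChar_injective h), hrot, hker, Subgroup.card_top, nat_card]
  ring

end DihedralGroup

theorem D_dihedral_even (n : ℕ) (hn : 0 < n) (heven : Even n) :
    D (DihedralGroup n) = ArithmeticFunction.sigma 1 n + 4 * n ∧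
    D (DihedralGroup n) ≠ 2 * (2 * n) ∧
    D (DihedralGroup n) ≠ 2 * (2 * n) + 1 ∧
    D (DihedralGroup n) ≠ 2 * (2 * n) - 1 := by
  have : NeZero n := ⟨hn.ne'⟩
  have hD := DihedralGroup.D_eq_sigma_one_add heven.two_dvd
  have hσ := ArithmeticFunction.add_one_le_sigma_one (n := n) (by obtain ⟨k, rfl⟩ := heven; omega)
  refine ⟨hD, ?_, ?_, ?_⟩ <;> omega
end
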